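/- arXiv:math/0702248 — 2 statements merged into one kernel-verified Lean document; each statement's English description precedes it below -/
import Mathlib

section
/- If M is aperiodic with stationary distribution π, then under the above construction, liminf_{k→∞} P^{k+m}(α, 𝒪) ≥ (1 − 2√δ_n) π S_n e > 0 for every α ∈ Δ; in particular, taking α = v, the point v is topologically aperiodic: liminf_{k→∞} P^k(v, 𝒪) > 0 for every open neighborhood 𝒪 of v. -/
/-!
Split a word of length `k + m` into a free prefix `u` and the fixed suffix `z ++ ys`, whose
product is `S = c (w vᵀ + δ T)` with `c = π S e`. A row vector `β ≥ 0` with `β ⬝ᵥ w ≥ √δ ‖β‖₁` is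
sent by `S` to a multiple of a point that the hypothesis on `O` places in `O`, with mass at least
`c (β ⬝ᵥ w - √δ ‖β‖₁)`; for every other `β` this lower bound is negative. Summing over the prefixes
gives `P^{k+m}(α, O) ≥ c (α Mᵏ ⬝ᵥ w - √δ)`. By Doeblin's contraction in `ℓ¹`, `α Mᵏ → π`, so the
bound tends to `c (1 - √δ) ≥ c (1 - 2√δ)`, since `π ⬝ᵥ w = 1`.
-/

open Matrix Filter
open scoped Classical

/-- The product `M(w) = M(w₁) ⋯ M(wₖ)` of a word. -/
def wordProd {s : ℕ} {Y : Type*} (M : Y → Matrix (Fin s) (Fin s) ℝ)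
    {n : ℕ} (w : Fin n → Y) : Matrix (Fin s) (Fin s) ℝ :=
  (List.ofFn (fun i => M (w i))).prod

/-- The k-step transition kernel of the α-chain. -/
noncomputable def Pker {s : ℕ} {Y : Type*} [Fintype Y]
    (M : Y → Matrix (Fin s) (Fin s) ℝ) (k : ℕ)
    (α : Fin s → ℝ) (A : Set (Fin s → ℝ)) : ℝ :=
  ∑ w : Fin k → Y,
    if ((∑ j, (α ᵥ* wordProd M w) j)⁻¹ • (α ᵥ* wordProd M w)) ∈ A
    then ∑ j, (α ᵥ* wordProd M w) j else 0

open Finset Topology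

section Stochastic

variable {ι : Type*} [Fintype ι]

theorem sum_abs_vecMul_le_of_sum_eq_zero {N : Matrix ι ι ℝ} {ε : ℝ}
    (hε : ∀ i j, ε ≤ N i j) (hrow : ∀ i, ∑ j, N i j = 1)
    {d : ι → ℝ} (hd : ∑ i, d i = 0) :
    ∑ j, |(d ᵥ* N) j| ≤ (1 - Fintype.card ι * ε) * ∑ i, |d i| := by
  -- since `∑ d = 0`, lowering every entry of `N` by `ε` does not change `d ᵥ* N`
  have hshift : ∀ j, (d ᵥ* N) j = ∑ i, d i * (N i j - ε) := fun j => by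
    simp only [vecMul, dotProduct, mul_sub, sum_sub_distrib, ← sum_mul, hd, zero_mul, sub_zero]
  calc ∑ j, |(d ᵥ* N) j| ≤ ∑ j, ∑ i, |d i| * (N i j - ε) := by
        gcongr with j
        rw [hshift]
        refine (abs_sum_le_sum_abs _ _).trans_eq (sum_congr rfl fun i _ => ?_)
        rw [abs_mul, abs_of_nonneg (sub_nonneg.2 (hε i j))]
    _ = (1 - Fintype.card ι * ε) * ∑ i, |d i| := by
        rw [sum_comm, mul_sum]
        refine sum_congr rfl fun i _ => ?_
        rw [← mul_sum, sum_sub_distrib, hrow, sum_const, card_univ, nsmul_eq_mul, mul_comm]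

theorem vecMul_pow_eq_self {P : Matrix ι ι ℝ} [DecidableEq ι] {π : ι → ℝ}
    (hstat : π ᵥ* P = π) (n : ℕ) : π ᵥ* P ^ n = π := by
  induction n with
  | zero => simp
  | succ n ih => rw [pow_succ, ← vecMul_vecMul, ih, hstat]

theorem Antitone.tendsto_zero_of_le_mul_of_add {a : ℕ → ℝ} (ha : Antitone a)
    (h0 : ∀ k, 0 ≤ a k) {n : ℕ} {r : ℝ} (hr : r < 1) (h : ∀ k, a (k + n) ≤ r * a k) :
    Tendsto a atTop (𝓝 0) := by
  have hL := tendsto_atTop_ciInf ha ⟨0, Set.forall_mem_range.2 h0⟩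
  have hL0 : 0 ≤ ⨅ k, a k := ge_of_tendsto' hL h0
  have hLr : ⨅ k, a k ≤ r * ⨅ k, a k :=
    le_of_tendsto_of_tendsto' ((tendsto_add_atTop_iff_nat n).2 hL) (hL.const_mul r) h
  rwa [show ⨅ k, a k = 0 by nlinarith] at hL

theorem tendsto_vecMul_pow_of_pos [DecidableEq ι] {P : Matrix ι ι ℝ}
    (hP : P ∈ rowStochastic ℝ ι) (hprim : ∃ n, ∀ i j, 0 < (P ^ n) i j)
    {π : ι → ℝ} (hπ : π ∈ stdSimplex ℝ ι) (hstat : π ᵥ* P = π)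
    {α : ι → ℝ} (hα : α ∈ stdSimplex ℝ ι) :
    Tendsto (fun k => α ᵥ* P ^ k) atTop (𝓝 π) := by
  obtain ⟨n, hn⟩ := hprim
  have : Nonempty ι := by
    obtain ⟨i, -⟩ := nonempty_of_sum_ne_zero (hπ.2.trans_ne one_ne_zero)
    exact ⟨i⟩
  obtain ⟨ij, -, hmin⟩ :=
    univ.exists_min_image (fun ij : ι × ι => (P ^ n) ij.1 ij.2) univ_nonempty
  set ε := (P ^ n) ij.1 ij.2
  set d : ℕ → ι → ℝ := fun k => α ᵥ* P ^ k - π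
  set a : ℕ → ℝ := fun k => ∑ i, |d k i|
  have ha_nonneg : ∀ k, 0 ≤ a k := fun k => sum_nonneg fun i _ => abs_nonneg _
  have hd_sum : ∀ k, ∑ i, d k i = 0 := fun k => by
    have h1 := vecMul_dotProduct_one_eq_one_rowStochastic (pow_mem hP k)
      ((dotProduct_one α).trans hα.2)
    rw [dotProduct_one] at h1
    simp only [d, Pi.sub_apply, sum_sub_distrib, h1, hπ.2, sub_self]
  have hd_add : ∀ k l, d (k + l) = d k ᵥ* P ^ l := fun k l => by
    simp only [d, pow_add, ← vecMul_vecMul, sub_vecMul, vecMul_pow_eq_self hstat]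
  have ha_anti : Antitone a := antitone_nat_of_succ_le fun k => by
    simpa [a, hd_add k 1] using sum_abs_vecMul_le_of_sum_eq_zero (ε := 0)
      (fun i j => hP.1 i j) (sum_row_of_mem_rowStochastic hP) (hd_sum k)
  have ha_contract : ∀ k, a (k + n) ≤ (1 - Fintype.card ι * ε) * a k := fun k => by
    simpa only [a, hd_add k n] using sum_abs_vecMul_le_of_sum_eq_zero
      (fun i j => hmin (i, j) (mem_univ _)) (sum_row_of_mem_rowStochastic (pow_mem hP n))
      (hd_sum k)
  have hcε : 0 < Fintype.card ι * ε := mul_pos (by exact_mod_cast Fintype.card_pos) (hn _ _)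
  have ha_lim := ha_anti.tendsto_zero_of_le_mul_of_add ha_nonneg (by linarith) ha_contract
  rw [tendsto_iff_norm_sub_tendsto_zero]
  refine squeeze_zero (fun _ => norm_nonneg _) (fun k => ?_) ha_lim
  exact (pi_norm_le_iff_of_nonneg (ha_nonneg k)).2 fun i =>
    single_le_sum (f := fun i => |d k i|) (fun i _ => abs_nonneg _) (mem_univ i)

end Stochastic

section MassIn

variable {ι : Type*} [Fintype ι]

noncomputable def massIn (A : Set (ι → ℝ)) (x : ι → ℝ) : ℝ :=
  if (∑ j, x j)⁻¹ • x ∈ A then ∑ j, x j else 0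

variable {A : Set (ι → ℝ)} {x : ι → ℝ}

theorem massIn_nonneg (hx : 0 ≤ ∑ j, x j) : 0 ≤ massIn A x := by
  unfold massIn
  split_ifs <;> simp [hx]

theorem massIn_of_mem (hx : (∑ j, x j)⁻¹ • x ∈ A) : massIn A x = ∑ j, x j := if_pos hx

theorem massIn_le (hx : 0 ≤ ∑ j, x j) : massIn A x ≤ ∑ j, x j := by
  unfold massIn
  split_ifs <;> simp [hx]

theorem massIn_smul {a : ℝ} (ha : a ≠ 0) : massIn A (a • x) = a * massIn A x := by
  have hsum : ∑ j, (a • x) j = a * ∑ j, x j := by simp [mul_sum]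
  have hnorm : (∑ j, (a • x) j)⁻¹ • (a • x) = (∑ j, x j)⁻¹ • x := by
    rw [hsum, smul_smul, mul_inv, mul_right_comm, inv_mul_cancel₀ ha, one_mul]
  unfold massIn
  rw [hnorm, hsum]
  split_ifs <;> simp

theorem mul_sub_sqrt_le_massIn_vecMul_of_le {S T : Matrix ι ι ℝ} {w v β : ι → ℝ} {c δ : ℝ}
    {O : Set (ι → ℝ)} (hc : 0 < c) (hδ0 : 0 ≤ δ) (hδ1 : δ ≤ 1) (hv : ∑ j, v j = 1)
    (hT : ∀ β : ι → ℝ, ∑ j, |(β ᵥ* T) j| ≤ ∑ i, |β i|)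
    (hS : S = c • (vecMulVec w v + δ • T))
    (hO : ∀ β : ι → ℝ, ∑ i, |β i| ≤ 1 → (1 + √δ * ∑ j, β j)⁻¹ • (v + √δ • β) ∈ O)
    (hp : 0 < β ⬝ᵥ w) (hpe : √δ * ∑ i, |β i| ≤ β ⬝ᵥ w) :
    c * (β ⬝ᵥ w - √δ * ∑ i, |β i|) ≤ massIn O (β ᵥ* S) := by
  set p := β ⬝ᵥ w
  set e := ∑ i, |β i|
  have he : 0 ≤ e := sum_nonneg fun i _ => abs_nonneg _
  have hq : ∑ j, |(β ᵥ* T) j| ≤ e := hT β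
  -- `β ᵥ* S` is a positive multiple of the point `v + √δ • β'` that `hO` puts in `O`
  set β' := (√δ / p) • (β ᵥ* T)
  have hsq : √δ * √δ = δ := Real.mul_self_sqrt hδ0
  have hβ'_abs : ∑ i, |β' i| = √δ / p * ∑ j, |(β ᵥ* T) j| := by
    simp [β', abs_mul, abs_of_nonneg (div_nonneg (Real.sqrt_nonneg δ) hp.le), mul_sum]
  have hβ' : ∑ i, |β' i| ≤ 1 := by
    rw [hβ'_abs, div_mul_eq_mul_div, div_le_one hp]
    exact (mul_le_mul_of_nonneg_left hq (Real.sqrt_nonneg δ)).trans hpe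
  have hβS_eq : β ᵥ* S = (c * p) • (v + √δ • β') := by
    have hcoef : c * p * (√δ * (√δ / p)) = c * δ := by
      rw [← mul_div_assoc, hsq]
      field_simp
    rw [hS, vecMul_smul, vecMul_add, vecMul_vecMulVec, vecMul_smul]
    simp only [β', smul_add, smul_smul, hcoef]
    rfl
  have hsum : ∑ j, (v + √δ • β') j = 1 + √δ * ∑ j, β' j := by
    simp [sum_add_distrib, mul_sum, hv]
  rw [hβS_eq, massIn_smul (mul_pos hc hp).ne', massIn_of_mem (by rw [hsum]; exact hO β' hβ'), hsum]
  have hβ'_sum : -(√δ / p * ∑ j, |(β ᵥ* T) j|) ≤ ∑ j, β' j := by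
    rw [← hβ'_abs, ← sum_neg_distrib]
    exact sum_le_sum fun j _ => neg_abs_le _
  have hδ_le : δ ≤ √δ := by nlinarith [Real.sqrt_le_one.mpr hδ1, Real.sqrt_nonneg δ]
  rw [mul_assoc]
  refine mul_le_mul_of_nonneg_left ?_ hc.le
  have : p * (√δ * (√δ / p * ∑ j, |(β ᵥ* T) j|)) = δ * ∑ j, |(β ᵥ* T) j| := by
    rw [← mul_assoc √δ, ← mul_div_assoc, hsq]
    field_simp
  nlinarith [mul_le_mul_of_nonneg_left hβ'_sum (mul_nonneg hp.le (Real.sqrt_nonneg δ))]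

theorem mul_sub_sqrt_le_massIn_vecMul {S T : Matrix ι ι ℝ} {w v β : ι → ℝ} {c δ : ℝ}
    {O : Set (ι → ℝ)} (hc : 0 < c) (hδ0 : 0 ≤ δ) (hδ1 : δ ≤ 1) (hv : ∑ j, v j = 1)
    (hT : ∀ β : ι → ℝ, ∑ j, |(β ᵥ* T) j| ≤ ∑ i, |β i|)
    (hS : S = c • (vecMulVec w v + δ • T))
    (hO : ∀ β : ι → ℝ, ∑ i, |β i| ≤ 1 → (1 + √δ * ∑ j, β j)⁻¹ • (v + √δ • β) ∈ O)
    (hβS : 0 ≤ ∑ j, (β ᵥ* S) j) :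
    c * (β ⬝ᵥ w - √δ * ∑ i, |β i|) ≤ massIn O (β ᵥ* S) := by
  by_cases hgood : 0 < β ⬝ᵥ w ∧ √δ * ∑ i, |β i| ≤ β ⬝ᵥ w
  · exact mul_sub_sqrt_le_massIn_vecMul_of_le hc hδ0 hδ1 hv hT hS hO hgood.1 hgood.2
  refine le_trans (mul_nonpos_of_nonneg_of_nonpos hc.le ?_) (massIn_nonneg hβS)
  by_cases hp : 0 < β ⬝ᵥ w
  · linarith [not_and.1 hgood hp]
  · nlinarith [Real.sqrt_nonneg δ, sum_nonneg fun i (_ : i ∈ univ) => abs_nonneg (β i)]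

end MassIn

section Words

variable {s : ℕ} {Y : Type*} (M : Y → Matrix (Fin s) (Fin s) ℝ)

theorem wordProd_nonneg (hpos : ∀ y i j, 0 ≤ M y i j) {n : ℕ} (u : Fin n → Y) (i j : Fin s) :
    0 ≤ wordProd M u i j := by
  refine List.prod_induction (fun A : Matrix (Fin s) (Fin s) ℝ => ∀ i j, 0 ≤ A i j)
    (fun A B hA hB i j => by
      rw [mul_apply]
      exact sum_nonneg fun l _ => mul_nonneg (hA i l) (hB l j))
    (fun i j => ?_) (fun A hA => ?_) i j
  · rw [one_apply]
    split_ifs <;> norm_num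
  · obtain ⟨k, rfl⟩ := List.mem_ofFn.1 hA
    exact hpos _

theorem vecMul_wordProd_nonneg (hpos : ∀ y i j, 0 ≤ M y i j) {n : ℕ} (u : Fin n → Y)
    {β : Fin s → ℝ} (hβ : ∀ i, 0 ≤ β i) (j : Fin s) : 0 ≤ (β ᵥ* wordProd M u) j := by
  simp only [vecMul, dotProduct]
  exact sum_nonneg fun i _ => mul_nonneg (hβ i) (wordProd_nonneg M hpos u i j)

theorem wordProd_cons {n : ℕ} (y : Y) (u : Fin n → Y) :
    wordProd M (Fin.cons y u) = M y * wordProd M u := by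
  simp [wordProd, List.ofFn_succ]

theorem wordProd_append {k m : ℕ} (u : Fin k → Y) (τ : Fin m → Y) :
    wordProd M (Fin.append u τ) = wordProd M u * wordProd M τ := by
  simp [wordProd, List.ofFn_add, Fin.append_right]

theorem wordProd_get (l : List Y) : wordProd M l.get = (l.map M).prod :=
  congrArg List.prod (List.ofFn_getElem_eq_map l M)

variable [Fintype Y]

theorem sum_wordProd (n : ℕ) : ∑ u : Fin n → Y, wordProd M u = (∑ y, M y) ^ n := by
  induction n with
  | zero => simp [wordProd]
  | succ n ih =>
    rw [← (Fin.consEquiv fun _ => Y).sum_comp, Fintype.sum_prod_type, pow_succ', ← ih, sum_mul]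
    simp [Fin.consEquiv, wordProd_cons, mul_sum]

theorem Pker_eq_sum_massIn (k : ℕ) (α : Fin s → ℝ) (A : Set (Fin s → ℝ)) :
    Pker M k α A = ∑ u : Fin k → Y, massIn A (α ᵥ* wordProd M u) := rfl

theorem sum_vecMul_wordProd (α : Fin s → ℝ) (k : ℕ) :
    ∑ u : Fin k → Y, α ᵥ* wordProd M u = α ᵥ* (∑ y, M y) ^ k := by
  rw [← sum_wordProd, vecMul_sum]

theorem sum_sum_vecMul_wordProd (hP : ∑ y, M y ∈ rowStochastic ℝ (Fin s))
    {α : Fin s → ℝ} (hα : ∑ i, α i = 1) (k : ℕ) :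
    ∑ u : Fin k → Y, ∑ j, (α ᵥ* wordProd M u) j = 1 := by
  rw [sum_comm, ← dotProduct_one]
  simp_rw [← Finset.sum_apply, sum_vecMul_wordProd]
  exact vecMul_dotProduct_one_eq_one_rowStochastic (pow_mem hP k) ((dotProduct_one α).trans hα)

theorem Pker_le_one (hpos : ∀ y i j, 0 ≤ M y i j) (hP : ∑ y, M y ∈ rowStochastic ℝ (Fin s))
    {α : Fin s → ℝ} (hα : α ∈ stdSimplex ℝ (Fin s)) (k : ℕ) (A : Set (Fin s → ℝ)) :
    Pker M k α A ≤ 1 := by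
  rw [Pker_eq_sum_massIn, ← sum_sum_vecMul_wordProd M hP hα.2 k]
  exact sum_le_sum fun u _ =>
    massIn_le (sum_nonneg fun j _ => vecMul_wordProd_nonneg M hpos u hα.1 j)

theorem sum_massIn_vecMul_le_Pker_add (hpos : ∀ y i j, 0 ≤ M y i j) {α : Fin s → ℝ}
    (hα : ∀ i, 0 ≤ α i) {k m : ℕ} (τ : Fin m → Y) (A : Set (Fin s → ℝ)) :
    ∑ u : Fin k → Y, massIn A (α ᵥ* wordProd M u ᵥ* wordProd M τ) ≤ Pker M (k + m) α A := by
  rw [Pker_eq_sum_massIn, ← (Fin.appendEquiv k m).sum_comp, Fintype.sum_prod_type]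
  refine sum_le_sum fun u _ => ?_
  change _ ≤ ∑ τ', massIn A (α ᵥ* wordProd M (Fin.append u τ'))
  simp only [wordProd_append, ← vecMul_vecMul]
  exact single_le_sum (f := fun τ' => massIn A (α ᵥ* wordProd M u ᵥ* wordProd M τ'))
    (fun τ' _ => massIn_nonneg (sum_nonneg fun j _ =>
      vecMul_wordProd_nonneg M hpos τ' (vecMul_wordProd_nonneg M hpos u hα) j))
    (mem_univ τ)

end Words

theorem mul_dotProduct_sub_sqrt_le_Pker_add {s : ℕ} {Y : Type*} [Fintype Y]
    {M : Y → Matrix (Fin s) (Fin s) ℝ} (hpos : ∀ y i j, 0 ≤ M y i j)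
    (hP : ∑ y, M y ∈ rowStochastic ℝ (Fin s)) {m : ℕ} (τ : Fin m → Y)
    {T : Matrix (Fin s) (Fin s) ℝ} {w v : Fin s → ℝ} {c δ : ℝ} {O : Set (Fin s → ℝ)}
    (hc : 0 < c) (hδ0 : 0 ≤ δ) (hδ1 : δ ≤ 1) (hv : ∑ j, v j = 1)
    (hT : ∀ β : Fin s → ℝ, ∑ j, |(β ᵥ* T) j| ≤ ∑ i, |β i|)
    (hS : wordProd M τ = c • (vecMulVec w v + δ • T))
    (hO : ∀ β : Fin s → ℝ, ∑ i, |β i| ≤ 1 → (1 + √δ * ∑ j, β j)⁻¹ • (v + √δ • β) ∈ O)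
    {α : Fin s → ℝ} (hα : α ∈ stdSimplex ℝ (Fin s)) (k : ℕ) :
    c * ((α ᵥ* (∑ y, M y) ^ k) ⬝ᵥ w - √δ) ≤ Pker M (k + m) α O := by
  have hβ : ∀ (u : Fin k → Y) i, 0 ≤ (α ᵥ* wordProd M u) i :=
    fun u => vecMul_wordProd_nonneg M hpos u hα.1
  calc c * ((α ᵥ* (∑ y, M y) ^ k) ⬝ᵥ w - √δ)
      = ∑ u : Fin k → Y,
          c * ((α ᵥ* wordProd M u) ⬝ᵥ w - √δ * ∑ i, |(α ᵥ* wordProd M u) i|) := by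
        simp_rw [abs_of_nonneg (hβ _ _), ← mul_sum, sum_sub_distrib, ← mul_sum, ← sum_dotProduct,
          sum_vecMul_wordProd, sum_sum_vecMul_wordProd M hP hα.2, mul_one]
    _ ≤ ∑ u : Fin k → Y, massIn O (α ᵥ* wordProd M u ᵥ* wordProd M τ) := by
        gcongr with u
        exact mul_sub_sqrt_le_massIn_vecMul hc hδ0 hδ1 hv hT hS hO
          (sum_nonneg fun j _ => vecMul_wordProd_nonneg M hpos τ (hβ u) j)
    _ ≤ Pker M (k + m) α O := sum_massIn_vecMul_le_Pker_add M hpos hα.1 τ O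

theorem stmt12_general (s : ℕ) (Y : Type*) [Fintype Y]
    (M : Y → Matrix (Fin s) (Fin s) ℝ)
    (hpos : ∀ y i j, 0 ≤ M y i j)
    (Mtot : Matrix (Fin s) (Fin s) ℝ) (hMtot : Mtot = ∑ y, M y)
    (hstoch : ∀ i, ∑ j, Mtot i j = 1)
    (hap : ∃ k, ∀ i j, 0 < (Mtot ^ k) i j)
    (π : Fin s → ℝ) (hπ : π ∈ stdSimplex ℝ (Fin s)) (hstat : π ᵥ* Mtot = π)
    (z ys : List Y)
    (S : Matrix (Fin s) (Fin s) ℝ) (hSdef : S = ((z ++ ys).map M).prod)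
    (hπS : 0 < ∑ j, (π ᵥ* S) j)
    (w v : Fin s → ℝ) (hw : π ⬝ᵥ w = 1) (hv : v ∈ stdSimplex ℝ (Fin s))
    (δ : ℝ) (hδ0 : 0 ≤ δ) (hδ : δ < 1 / 4)
    (T : Matrix (Fin s) (Fin s) ℝ)
    (hT : ∀ β : Fin s → ℝ, ∑ j, |(β ᵥ* T) j| ≤ ∑ i, |β i|)
    (hdecomp : (∑ j, (π ᵥ* S) j)⁻¹ • S = (Matrix.of fun i j => w i * v j) + δ • T)
    (O : Set (Fin s → ℝ))
    (hO : ∀ β : Fin s → ℝ, (∑ i, |β i|) ≤ 1 →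
      (1 + Real.sqrt δ * ∑ j, β j)⁻¹ • (v + Real.sqrt δ • β) ∈ O)
    (m : ℕ) (hm : m = (z ++ ys).length) :
    0 < (1 - 2 * Real.sqrt δ) * ∑ j, (π ᵥ* S) j ∧
    (∀ α ∈ stdSimplex ℝ (Fin s),
      (1 - 2 * Real.sqrt δ) * (∑ j, (π ᵥ* S) j) ≤
        Filter.liminf (fun k => Pker M (k + m) α O) Filter.atTop) ∧
    0 < Filter.liminf (fun k => Pker M k v O) Filter.atTop := by
  subst hMtot hm
  set c := ∑ j, (π ᵥ* S) j
  have hP : ∑ y, M y ∈ rowStochastic ℝ (Fin s) := mem_rowStochastic_iff_sum.2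
    ⟨fun i j => by rw [Matrix.sum_apply]; exact sum_nonneg fun y _ => hpos y i j, hstoch⟩
  have hS : wordProd M (z ++ ys).get = c • (vecMulVec w v + δ • T) := by
    rw [wordProd_get, ← hSdef, vecMulVec, ← hdecomp, smul_smul, mul_inv_cancel₀ hπS.ne', one_smul]
  have hsqrt : √δ < 1 / 2 := (Real.sqrt_lt' (by norm_num)).2 (by linarith)
  have hpos_bound : 0 < (1 - 2 * √δ) * c := mul_pos (by linarith) hπS
  have hliminf : ∀ α ∈ stdSimplex ℝ (Fin s),
      (1 - 2 * √δ) * c ≤ liminf (fun k => Pker M (k + (z ++ ys).length) α O) atTop := by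
    intro α hα
    have hlim : Tendsto (fun k => c * ((α ᵥ* (∑ y, M y) ^ k) ⬝ᵥ w - √δ)) atTop
        (𝓝 (c * (1 - √δ))) := by
      rw [← hw]
      exact (((continuous_id.dotProduct continuous_const).tendsto π).comp
        (tendsto_vecMul_pow_of_pos hP hap hπ hstat hα) |>.sub_const _).const_mul c
    calc (1 - 2 * √δ) * c ≤ c * (1 - √δ) := by nlinarith [Real.sqrt_nonneg δ]
      _ = liminf (fun k => c * ((α ᵥ* (∑ y, M y) ^ k) ⬝ᵥ w - √δ)) atTop := hlim.liminf_eq.symm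
      _ ≤ liminf (fun k => Pker M (k + (z ++ ys).length) α O) atTop :=
        liminf_le_liminf (Eventually.of_forall fun k =>
            mul_dotProduct_sub_sqrt_le_Pker_add hpos hP _ hπS hδ0 (by linarith) hv.2 hT hS hO hα k)
          hlim.isBoundedUnder_ge
          (isCoboundedUnder_ge_of_le atTop fun k => Pker_le_one M hpos hP hα _ O)
  refine ⟨hpos_bound, hliminf, ?_⟩
  rw [← liminf_nat_add _ (z ++ ys).length]
  exact hpos_bound.trans_le (hliminf v hv)

/-- If `M` is aperiodic with stationary distribution `π`, then under the construction,
`liminf_{k→∞} P^{k+m}(α, 𝒪) ≥ (1 − 2√δₙ) π Sₙ e > 0` for every `α ∈ Δ`; in particular,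
taking `α = v`, the point `v` is topologically aperiodic: `liminf_k Pᵏ(v, 𝒪) > 0`. -/
theorem stmt12 (s : ℕ) (Y : Type*) [Fintype Y]
    (M : Y → Matrix (Fin s) (Fin s) ℝ)
    (hpos : ∀ y i j, 0 ≤ M y i j)
    (Mtot : Matrix (Fin s) (Fin s) ℝ) (hMtot : Mtot = ∑ y, M y)
    (hstoch : ∀ i, ∑ j, Mtot i j = 1)
    (hap : ∃ k, ∀ i j, 0 < (Mtot ^ k) i j)
    (π : Fin s → ℝ) (hπ : π ∈ stdSimplex ℝ (Fin s)) (hstat : π ᵥ* Mtot = π)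
    (z ys : List Y)
    (S : Matrix (Fin s) (Fin s) ℝ) (hSdef : S = ((z ++ ys).map M).prod)
    (hπS : 0 < ∑ j, (π ᵥ* S) j)
    (w v : Fin s → ℝ) (hw : π ⬝ᵥ w = 1) (hv : v ∈ stdSimplex ℝ (Fin s))
    (δ : ℝ) (hδ0 : 0 ≤ δ) (hδ : δ < 1 / 4)
    (T : Matrix (Fin s) (Fin s) ℝ)
    (hT : ∀ β : Fin s → ℝ, ∑ j, |(β ᵥ* T) j| ≤ ∑ i, |β i|)
    (hdecomp : (∑ j, (π ᵥ* S) j)⁻¹ • S = (Matrix.of fun i j => w i * v j) + δ • T)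
    (O : Set (Fin s → ℝ))
    (hO : ∀ β : Fin s → ℝ, (∑ i, |β i|) ≤ 1 →
      (1 + Real.sqrt δ * ∑ j, β j)⁻¹ • (v + Real.sqrt δ • β) ∈ O)
    (t : ℝ) (ht : t = 2 * Real.sqrt δ * ∑ j, (π ᵥ* S) j)
    (m : ℕ) (hm : m = (z ++ ys).length) :
    0 < (1 - 2 * Real.sqrt δ) * ∑ j, (π ᵥ* S) j ∧
    (∀ α ∈ stdSimplex ℝ (Fin s),
      (1 - 2 * Real.sqrt δ) * (∑ j, (π ᵥ* S) j) ≤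
        Filter.liminf (fun k => Pker M (k + m) α O) Filter.atTop) ∧
    0 < Filter.liminf (fun k => Pker M k v O) Filter.atTop :=
  stmt12_general s Y M hpos Mtot hMtot hstoch hap π hπ hstat z ys S hSdef hπS w v hw hv δ hδ0 hδ T
    hT hdecomp O hO m hm
end

section
/- Let M(0) be the 4×4 matrix with rows (p,0,0,0), (0,1/2,0,0), (1/2,0,0,0), (0,1/2,0,0), where 0 < p < 1. Then for all n ≥ 1, M(0)^n has rows (p^n,0,0,0), (0,2^{-n},0,0), (p^{n-1}/2,0,0,0), (0,2^{-n},0,0). Consequently: if p > 1/2, then M(0)^n/(e'M(0)^n e) converges to (2p/(2p+1)) times the matrix with rows (1,0,0,0),(0,0,0,0),(1/(2p),0,0,0),(0,0,0,0); if p < 1/2, it converges to the matrix with rows (0,0,0,0),(0,1/2,0,0),(0,0,0,0),(0,1/2,0,0). In both cases the limit has rank 1. -/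
open Matrix Filter

/-- Kaijser's matrix `M(0)` with parameter `p`. -/
noncomputable def M015 (p : ℝ) : Matrix (Fin 4) (Fin 4) ℝ :=
  !![p, 0, 0, 0; 0, 1/2, 0, 0; 1/2, 0, 0, 0; 0, 1/2, 0, 0]

/-!
`M(0)` is the sum of its two columns `P = u e₀ᵀ` and `Q = w e₁ᵀ`, and since `e₀ᵀu = p`,
`e₁ᵀw = 1/2`, `e₀ᵀw = e₁ᵀu = 0` we get `P² = pP`, `Q² = Q/2`, `PQ = QP = 0`, hence
`M(0)ⁿ⁺¹ = pⁿ P + 2⁻ⁿ Q`. Dividing by the entry sum, which is linear, the term with the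
smaller geometric rate dies out, and the limit is the dominant column piece divided by its
entry sum: a rank-one matrix.
-/

open Topology

theorem pow_succ_add_of_mul_eq {𝕜 R : Type*} [CommSemiring 𝕜] [Semiring R] [Algebra 𝕜 R]
    {A B : R} {a b : 𝕜} (hAA : A * A = a • A) (hBB : B * B = b • B) (hAB : A * B = 0)
    (hBA : B * A = 0) (k : ℕ) : (A + B) ^ (k + 1) = a ^ k • A + b ^ k • B := by
  induction k with
  | zero => simp
  | succ k ih =>
    rw [pow_succ, ih]
    simp only [add_mul, mul_add, smul_mul_assoc, hAA, hBB, hAB, hBA, smul_zero, add_zero,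
      zero_add, smul_smul, pow_succ]

theorem tendsto_inv_smul_of_eq_pow_smul_add_pow_smul {𝕜 E : Type*} [NormedField 𝕜]
    [AddCommGroup E] [Module 𝕜 E] [TopologicalSpace E] [ContinuousAdd E] [ContinuousSMul 𝕜 E]
    (σ : E →ₗ[𝕜] 𝕜) {X : ℕ → E} {A B : E} {a b : 𝕜}
    (hX : ∀ k, X k = a ^ k • A + b ^ k • B) (ha : a ≠ 0) (hba : ‖b / a‖ < 1) (hA : σ A ≠ 0) :
    Tendsto (fun k => (σ (X k))⁻¹ • X k) atTop (𝓝 ((σ A)⁻¹ • A)) := by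
  set t := b / a
  have ht : Tendsto (fun k => t ^ k) atTop (𝓝 0) := tendsto_pow_atTop_nhds_zero_of_norm_lt_one hba
  have hX' : ∀ k, X k = a ^ k • (A + t ^ k • B) := fun k => by
    rw [hX, smul_add, smul_smul, ← mul_pow, mul_div_cancel₀ _ ha]
  have hlim : Tendsto (fun k => (σ A + t ^ k * σ B)⁻¹ • (A + t ^ k • B)) atTop
      (𝓝 ((σ A)⁻¹ • A)) := by
    have h := ((tendsto_const_nhds (x := σ A)).add (ht.mul_const (σ B))).inv₀ (by simpa using hA)
      |>.smul ((tendsto_const_nhds (x := A)).add (ht.smul_const B))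
    simpa using h
  refine hlim.congr fun k => ?_
  -- the common factor `a ^ k` cancels, also when `σ (X k) = 0`
  rw [hX', map_smul, map_add, map_smul, smul_eq_mul, smul_eq_mul, mul_inv, mul_smul,
    smul_comm, inv_smul_smul₀ (pow_ne_zero k ha)]

namespace Matrix

variable {m n R : Type*}

def entrySum [Fintype m] [Fintype n] [CommSemiring R] : Matrix m n R →ₗ[R] R where
  toFun X := ∑ i, ∑ j, X i j
  map_add' X Y := by simp only [add_apply, Finset.sum_add_distrib]
  map_smul' c X := by simp only [smul_apply, smul_eq_mul, Finset.mul_sum, RingHom.id_apply]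

theorem entrySum_apply [Fintype m] [Fintype n] [CommSemiring R] (X : Matrix m n R) :
    entrySum X = ∑ i, ∑ j, X i j :=
  rfl

theorem rank_vecMulVec_eq_one [Fintype n] [Field R] {u : m → R} {v : n → R} (hu : u ≠ 0)
    (hv : v ≠ 0) : (vecMulVec u v).rank = 1 := by
  classical
  refine le_antisymm (rank_vecMulVec_le u v) (Nat.one_le_iff_ne_zero.2 fun h => ?_)
  obtain ⟨i, hi⟩ := Function.ne_iff.mp hu
  obtain ⟨j, hj⟩ := Function.ne_iff.mp hv
  rw [rank, Submodule.finrank_eq_zero, LinearMap.range_eq_bot, ← toLin'_apply',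
    LinearEquiv.map_eq_zero_iff] at h
  exact mul_ne_zero hi hj congr($h i j)

end Matrix

noncomputable def M015Col0 (p : ℝ) : Matrix (Fin 4) (Fin 4) ℝ :=
  vecMulVec ![p, 0, 1/2, 0] ![1, 0, 0, 0]

noncomputable def M015Col1 : Matrix (Fin 4) (Fin 4) ℝ :=
  vecMulVec ![0, 1/2, 0, 1/2] ![0, 1, 0, 0]

theorem M015_eq_add (p : ℝ) : M015 p = M015Col0 p + M015Col1 := by
  ext i j
  fin_cases i <;> fin_cases j <;> simp [M015, M015Col0, M015Col1]

theorem M015_pow_succ (p : ℝ) (k : ℕ) :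
    M015 p ^ (k + 1) = p ^ k • M015Col0 p + (1/2 : ℝ) ^ k • M015Col1 := by
  rw [M015_eq_add]
  refine pow_succ_add_of_mul_eq ?_ ?_ ?_ ?_ k <;>
    simp only [M015Col0, M015Col1, vecMulVec_mul_vecMulVec, vecMulVec_smul,
      cons_dotProduct_cons, dotProduct_of_isEmpty] <;>
    norm_num

theorem M015_pow {n : ℕ} (p : ℝ) (hn : 1 ≤ n) : M015 p ^ n =
    !![p^n, 0, 0, 0; 0, (1/2:ℝ)^n, 0, 0; p^(n-1)/2, 0, 0, 0; 0, (1/2:ℝ)^n, 0, 0] := by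
  obtain ⟨k, rfl⟩ := Nat.exists_eq_add_of_le' hn
  rw [M015_pow_succ]
  ext i j
  fin_cases i <;> fin_cases j <;> simp [M015Col0, M015Col1, pow_succ]; ring

theorem entrySum_M015Col0 (p : ℝ) : entrySum (M015Col0 p) = p + 1/2 := by
  simp [entrySum_apply, M015Col0, Fin.sum_univ_four]

theorem entrySum_M015Col1 : entrySum M015Col1 = 1 := by
  simp [entrySum_apply, M015Col1, Fin.sum_univ_four]; norm_num

theorem tendsto_normalized_M015_pow_of_half_lt {p : ℝ} (hp : 1/2 < p) :
    Tendsto (fun n => (entrySum (M015 p ^ n))⁻¹ • M015 p ^ n) atTop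
      (𝓝 ((p + 1/2)⁻¹ • M015Col0 p)) := by
  have hp0 : 0 < p := by linarith
  rw [← tendsto_add_atTop_iff_nat 1, ← entrySum_M015Col0]
  refine tendsto_inv_smul_of_eq_pow_smul_add_pow_smul entrySum (M015_pow_succ p) hp0.ne' ?_
    (by rw [entrySum_M015Col0]; positivity)
  rw [Real.norm_eq_abs, abs_div, abs_of_pos hp0, abs_of_pos one_half_pos, div_lt_one hp0]
  exact hp

theorem tendsto_normalized_M015_pow_of_lt_half {p : ℝ} (hp0 : 0 < p) (hp : p < 1/2) :
    Tendsto (fun n => (entrySum (M015 p ^ n))⁻¹ • M015 p ^ n) atTop (𝓝 M015Col1) := by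
  have h := tendsto_inv_smul_of_eq_pow_smul_add_pow_smul entrySum
    (fun k => (M015_pow_succ p k).trans (add_comm _ _)) (by norm_num) ?_
    (by rw [entrySum_M015Col1]; norm_num)
  · rw [entrySum_M015Col1, inv_one, one_smul] at h
    exact (tendsto_add_atTop_iff_nat 1).1 h
  rw [Real.norm_eq_abs, abs_div, abs_of_pos hp0, abs_of_pos (by norm_num)]
  linarith

theorem inv_smul_M015Col0_eq {p : ℝ} (hp : 0 < p) :
    (p + 1/2)⁻¹ • M015Col0 p =
      (2*p/(2*p+1)) • !![(1:ℝ), 0, 0, 0; 0, 0, 0, 0; 1/(2*p), 0, 0, 0; 0, 0, 0, 0] := by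
  ext i j
  fin_cases i <;> fin_cases j <;> simp [M015Col0] <;> field_simp

theorem M015Col1_eq : M015Col1 = !![(0:ℝ), 0, 0, 0; 0, 1/2, 0, 0; 0, 0, 0, 0; 0, 1/2, 0, 0] := by
  ext i j
  fin_cases i <;> fin_cases j <;> simp [M015Col1]

theorem rank_M015Col0 (p : ℝ) : (M015Col0 p).rank = 1 :=
  rank_vecMulVec_eq_one (fun h => by simpa using congrFun h 2)
    (fun h => by simpa using congrFun h 0)

theorem rank_M015Col1 : M015Col1.rank = 1 :=
  rank_vecMulVec_eq_one (fun h => by simpa using congrFun h 1)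
    (fun h => by simpa using congrFun h 1)

theorem stmt15_general (p : ℝ) (hp0 : 0 < p) :
    (∀ n : ℕ, 1 ≤ n → (M015 p) ^ n =
      !![p^n, 0, 0, 0; 0, (1/2:ℝ)^n, 0, 0; p^(n-1)/2, 0, 0, 0; 0, (1/2:ℝ)^n, 0, 0]) ∧
    (1/2 < p →
      Tendsto (fun n => (∑ i, ∑ j, ((M015 p) ^ n) i j)⁻¹ • (M015 p) ^ n) atTop
        (nhds ((2*p/(2*p+1)) •
          !![(1:ℝ), 0, 0, 0; 0, 0, 0, 0; 1/(2*p), 0, 0, 0; 0, 0, 0, 0])) ∧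
      Matrix.rank ((2*p/(2*p+1)) •
        !![(1:ℝ), 0, 0, 0; 0, 0, 0, 0; 1/(2*p), 0, 0, 0; 0, 0, 0, 0]) = 1) ∧
    (p < 1/2 →
      Tendsto (fun n => (∑ i, ∑ j, ((M015 p) ^ n) i j)⁻¹ • (M015 p) ^ n) atTop
        (nhds !![(0:ℝ), 0, 0, 0; 0, 1/2, 0, 0; 0, 0, 0, 0; 0, 1/2, 0, 0]) ∧
      Matrix.rank !![(0:ℝ), 0, 0, 0; 0, 1/2, 0, 0; 0, 0, 0, 0; 0, 1/2, 0, 0] = 1) := by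
  refine ⟨fun n hn => M015_pow p hn, fun hp => ?_, fun hp => ?_⟩
  · rw [← inv_smul_M015Col0_eq hp0,
      rank_smul_of_mem_nonZeroDivisors _ (mem_nonZeroDivisors_of_ne_zero (by positivity)),
      rank_M015Col0]
    exact ⟨tendsto_normalized_M015_pow_of_half_lt hp, rfl⟩
  · rw [← M015Col1_eq, rank_M015Col1]
    exact ⟨tendsto_normalized_M015_pow_of_lt_half hp0 hp, rfl⟩

/-- For Kaijser's `M(0)`: explicit formula for `M(0)ⁿ` (`n ≥ 1`), and the rescaled powers
`M(0)ⁿ/(e'M(0)ⁿe)` converge to an explicit rank-one matrix (one limit if `p > 1/2`,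
another if `p < 1/2`). -/
theorem stmt15 (p : ℝ) (hp0 : 0 < p) (hp1 : p < 1) :
    (∀ n : ℕ, 1 ≤ n → (M015 p) ^ n =
      !![p^n, 0, 0, 0; 0, (1/2:ℝ)^n, 0, 0; p^(n-1)/2, 0, 0, 0; 0, (1/2:ℝ)^n, 0, 0]) ∧
    (1/2 < p →
      Tendsto (fun n => (∑ i, ∑ j, ((M015 p) ^ n) i j)⁻¹ • (M015 p) ^ n) atTop
        (nhds ((2*p/(2*p+1)) •
          !![(1:ℝ), 0, 0, 0; 0, 0, 0, 0; 1/(2*p), 0, 0, 0; 0, 0, 0, 0])) ∧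
      Matrix.rank ((2*p/(2*p+1)) •
        !![(1:ℝ), 0, 0, 0; 0, 0, 0, 0; 1/(2*p), 0, 0, 0; 0, 0, 0, 0]) = 1) ∧
    (p < 1/2 →
      Tendsto (fun n => (∑ i, ∑ j, ((M015 p) ^ n) i j)⁻¹ • (M015 p) ^ n) atTop
        (nhds !![(0:ℝ), 0, 0, 0; 0, 1/2, 0, 0; 0, 0, 0, 0; 0, 1/2, 0, 0]) ∧
      Matrix.rank !![(0:ℝ), 0, 0, 0; 0, 1/2, 0, 0; 0, 0, 0, 0; 0, 1/2, 0, 0] = 1) :=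
  stmt15_general p hp0
end
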